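/- Let N = 2ⁿ·M with n ≥ 1 and M ≥ 3 odd. Then the characteristic polynomial of the Hadamard walk on C_M divides the characteristic polynomial of the Hadamard walk on C_N. -/

import Mathlib

open Polynomial Matrix

/-- Top-row half of the Hadamard matrix. -/
noncomputable def Pmat : Matrix (Fin 2) (Fin 2) ℂ :=
  ((Real.sqrt 2 : ℝ) : ℂ)⁻¹ • !![1, 1; 0, 0]

/-- Bottom-row half of the Hadamard matrix. -/
noncomputable def Qmat : Matrix (Fin 2) (Fin 2) ℂ :=
  ((Real.sqrt 2 : ℝ) : ℂ)⁻¹ • !![0, 0; 1, -1]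

/-- Auxiliary matrix R. -/
noncomputable def Rmat : Matrix (Fin 2) (Fin 2) ℂ :=
  ((Real.sqrt 2 : ℝ) : ℂ)⁻¹ • !![1, -1; 0, 0]

/-- Auxiliary matrix S. -/
noncomputable def Smat : Matrix (Fin 2) (Fin 2) ℂ :=
  ((Real.sqrt 2 : ℝ) : ℂ)⁻¹ • !![0, 0; 1, 1]

/-- The 2N×2N evolution operator of the Hadamard walk on the cycle C_N:
block (k, k+1 mod N) is P, block (k, k-1 mod N) is Q (their sum if these coincide). -/
noncomputable def hadU (N : ℕ) : Matrix (Fin N × Fin 2) (Fin N × Fin 2) ℂ :=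
  fun ki lj =>
    (if (lj.1 : ℕ) = ((ki.1 : ℕ) + 1) % N then Pmat ki.2 lj.2 else 0) +
    (if ((lj.1 : ℕ) + 1) % N = (ki.1 : ℕ) then Qmat ki.2 lj.2 else 0)

/-- Adjacency matrix of the cycle C_N (with a double edge when N = 2),
counting left and right moves separately. -/
def adjC (N : ℕ) : Matrix (Fin N) (Fin N) ℤ :=
  fun k l =>
    (if (l : ℕ) = ((k : ℕ) + 1) % N then 1 else 0) +
    (if ((l : ℕ) + 1) % N = (k : ℕ) then 1 else 0)

/-! Functions on `C_M` pulled back along the covering `C_{KM} → C_M`, `k ↦ k mod M`, form a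
subspace that the walk on `C_{KM}` leaves invariant and on which it acts as the walk on `C_M`,
because the covering map commutes with the rotations of the two cycles. The characteristic
polynomial of the restriction of an operator to an invariant subspace divides that of the
operator. -/

theorem Matrix.charpoly_dvd_of_mul_eq_mul {K m n : Type*} [Field K] [Fintype m] [DecidableEq m]
    [Fintype n] [DecidableEq n] {A : Matrix n n K} {B : Matrix m m K} {L : Matrix n m K}
    (hL : Function.Injective L.mulVec) (h : A * L = L * B) : B.charpoly ∣ A.charpoly := by
  classical
  -- in a basis extending the columns of `L`, `A` is block upper triangular with `B` in the corner
  have hcols := mulVec_injective_iff.mp hL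
  let b := Module.Basis.sumExtend hcols
  have : Finite (m ⊕ Module.Basis.sumExtendIndex hcols) := Module.Finite.finite_basis b
  have : Finite (Module.Basis.sumExtendIndex hcols) :=
    .of_injective _ (Sum.inr_injective (α := m))
  have := Fintype.ofFinite (Module.Basis.sumExtendIndex hcols)
  have hb (j : m) : b (Sum.inl j) = L.col j := by
    simp only [b, Module.Basis.sumExtend, Module.Basis.reindex_apply, Module.Basis.coe_extend]
    rfl
  have hAb (j : m) : A.toLin' (b (Sum.inl j)) = ∑ k, B k j • b (Sum.inl k) := by
    have : A *ᵥ L.col j = L *ᵥ B.col j := by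
      rw [← mulVec_single_one, ← mulVec_single_one, mulVec_mulVec, mulVec_mulVec, h]
    simp only [hb, toLin'_apply, this, mulVec_eq_sum, op_smul_eq_smul, col_apply]
    rfl
  rw [← charpoly_toLin' A, ← LinearMap.charpoly_toMatrix _ b]
  have hT₁₁ : (LinearMap.toMatrix b b A.toLin').toBlocks₁₁ = B := by
    ext i j
    simp [toBlocks₁₁, LinearMap.toMatrix_apply, hAb, Finsupp.single_apply]
  have hT₂₁ : (LinearMap.toMatrix b b A.toLin').toBlocks₂₁ = 0 := by
    ext i j
    simp [toBlocks₂₁, LinearMap.toMatrix_apply, hAb]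
  rw [← fromBlocks_toBlocks (LinearMap.toMatrix b b A.toLin'), hT₂₁, charpoly_fromBlocks_zero₂₁,
    hT₁₁]
  exact dvd_mul_right _ _

section CoinedWalk

variable {V W C R : Type*} [Semiring R]

def coinedWalk [DecidableEq V] (σ : Equiv.Perm V) (P Q : Matrix C C R) :
    Matrix (V × C) (V × C) R :=
  Matrix.of fun x y =>
    (if y.1 = σ x.1 then P x.2 y.2 else 0) + (if σ y.1 = x.1 then Q x.2 y.2 else 0)

def pullbackMatrix [DecidableEq W] [DecidableEq C] (π : V → W) : Matrix (V × C) (W × C) R :=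
  Matrix.of fun x y => if (π x.1, x.2) = y then 1 else 0

theorem coinedWalk_mulVec [Fintype V] [DecidableEq V] [Fintype C] (σ : Equiv.Perm V)
    (P Q : Matrix C C R) (x : V × C → R) (v : V) (c : C) :
    (coinedWalk σ P Q *ᵥ x) (v, c) =
      (P *ᵥ fun d => x (σ v, d)) c + (Q *ᵥ fun d => x (σ.symm v, d)) c := by
  simp [coinedWalk, mulVec, dotProduct, Fintype.sum_prod_type, add_mul, Finset.sum_add_distrib,
    ite_mul, ← Equiv.eq_symm_apply]

variable [Fintype W] [DecidableEq W] [Fintype C] [DecidableEq C]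

theorem pullbackMatrix_mulVec (π : V → W) (x : W × C → R) (v : V) (c : C) :
    (pullbackMatrix π *ᵥ x) (v, c) = x (π v, c) := by
  simp [pullbackMatrix, mulVec, dotProduct]

theorem pullbackMatrix_mulVec_injective {π : V → W} (hπ : Function.Surjective π) :
    Function.Injective (pullbackMatrix π : Matrix (V × C) (W × C) R).mulVec := by
  intro x y hxy
  ext ⟨w, c⟩
  obtain ⟨v, rfl⟩ := hπ w
  simpa [pullbackMatrix_mulVec] using congrFun hxy (v, c)

theorem coinedWalk_mul_pullbackMatrix [Fintype V] [DecidableEq V] {σ : Equiv.Perm V}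
    {τ : Equiv.Perm W} {π : V → W} (h : ∀ v, π (σ v) = τ (π v)) (P Q : Matrix C C R) :
    coinedWalk σ P Q * (pullbackMatrix π : Matrix (V × C) (W × C) R) =
      (pullbackMatrix π : Matrix (V × C) (W × C) R) * coinedWalk τ P Q := by
  have h_symm (v : V) : π (σ.symm v) = τ.symm (π v) := by
    rw [Equiv.eq_symm_apply, ← h, Equiv.apply_symm_apply]
  refine Matrix.ext_iff_mulVec.mpr fun x => funext fun ⟨v, c⟩ => ?_
  simp only [← mulVec_mulVec, coinedWalk_mulVec, pullbackMatrix_mulVec, h, h_symm]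

end CoinedWalk

theorem Fin.val_finRotate {n : ℕ} (i : Fin n) : (finRotate n i : ℕ) = (i + 1) % n := by
  have := i.neZero
  rw [finRotate_apply, Fin.val_add, Fin.val_one', Nat.add_mod_mod]

theorem Fin.modNat_finRotate {K M : ℕ} (i : Fin (K * M)) :
    (finRotate (K * M) i).modNat = finRotate M i.modNat := by
  ext
  simp only [Fin.coe_modNat, Fin.val_finRotate, Nat.mod_mod_of_dvd _ (dvd_mul_left M K)]
  exact (Nat.mod_add_mod _ _ _).symm

theorem Fin.modNat_surjective {K M : ℕ} (hK : K ≠ 0) :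
    Function.Surjective (Fin.modNat : Fin (K * M) → Fin M) :=
  fun j => ⟨Fin.mkDivMod ⟨0, Nat.pos_of_ne_zero hK⟩ j, Fin.modNat_mkDivMod _ _⟩

theorem hadU_eq_coinedWalk (N : ℕ) : hadU N = coinedWalk (finRotate N) Pmat Qmat := by
  ext ⟨k, i⟩ ⟨l, j⟩
  simp only [hadU, coinedWalk, of_apply, Fin.ext_iff, Fin.val_finRotate]

theorem hadU_charpoly_dvd_mul (K M : ℕ) (hK : K ≠ 0) :
    (hadU M).charpoly ∣ (hadU (K * M)).charpoly := by
  rw [hadU_eq_coinedWalk, hadU_eq_coinedWalk]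
  exact charpoly_dvd_of_mul_eq_mul (pullbackMatrix_mulVec_injective (Fin.modNat_surjective hK))
    (coinedWalk_mul_pullbackMatrix Fin.modNat_finRotate Pmat Qmat)

theorem hadamard_walk_charpoly_dvd_general (n M : ℕ) :
    (hadU M).charpoly ∣ (hadU (2 ^ n * M)).charpoly :=
  hadU_charpoly_dvd_mul _ M (pow_ne_zero n two_ne_zero)

theorem hadamard_walk_charpoly_dvd (n M : ℕ) (hn : 1 ≤ n) (hM : 3 ≤ M)
    (hodd : Odd M) :
    (hadU M).charpoly ∣ (hadU (2 ^ n * M)).charpoly :=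
  hadamard_walk_charpoly_dvd_general n M
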